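/- arXiv:math/9908074 — 3 statements merged into one kernel-verified Lean document; each statement's English description precedes it below -/
import Mathlib

section
/- For every Tychonoff space X, the covering dimension of X (defined via finite functionally open covers) equals the covering dimension of its Stone–Čech compactification βX. -/
open Set Topology

universe u v w

/-- An abstract simplicial complex on a vertex set `V`. -/
structure SimpComplex (V : Type v) where
  faces : Set (Finset V)
  down_closed : ∀ s ∈ faces, ∀ t, t ⊆ s → t.Nonempty → t ∈ faces

/-- The geometric realization of a simplicial complex with the metric (ℓ¹) topology,
realized inside the Banach space `ℓ¹(V)`. -/
def SimpComplex.space {V : Type v} (K : SimpComplex V) : Set (lp (fun _ : V => ℝ) 1) :=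
  {f | ∃ s ∈ K.faces, (∀ v : V, (f : ∀ _ : V, ℝ) v ≠ 0 → v ∈ s) ∧
    (∀ v : V, 0 ≤ (f : ∀ _ : V, ℝ) v) ∧ ∑ v ∈ s, (f : ∀ _ : V, ℝ) v = 1}

/-- `Z` is an absolute extensor of `X`: every continuous map from a closed subset of `X`
into `Z` extends continuously over all of `X`. -/
def IsAE (Z X : Type*) [TopologicalSpace Z] [TopologicalSpace X] : Prop :=
  ∀ Y : Set X, IsClosed Y → ∀ f : C(Y, Z), ∃ g : C(X, Z), ∀ y : Y, g y = f y

/-- `Z` is an absolute neighborhood extensor of `X`. -/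
def IsANE (Z X : Type*) [TopologicalSpace Z] [TopologicalSpace X] : Prop :=
  ∀ Y : Set X, IsClosed Y → ∀ f : C(Y, Z),
    ∃ U : Set X, IsOpen U ∧ Y ⊆ U ∧ ∃ g : C(U, Z),
      ∀ (y : Y) (h : (y : X) ∈ U), g ⟨y, h⟩ = f y

/-- A space is countably compact if every countable open cover has a finite subcover. -/
def CountablyCompact (X : Type*) [TopologicalSpace X] : Prop :=
  ∀ 𝒰 : ℕ → Set X, (∀ n, IsOpen (𝒰 n)) → (⋃ n, 𝒰 n) = univ →
    ∃ t : Finset ℕ, (⋃ n ∈ t, 𝒰 n) = univ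

/-- A set is functionally open if it is the cozero set of a real-valued continuous function. -/
def FunctionallyOpen {X : Type*} [TopologicalSpace X] (U : Set X) : Prop :=
  ∃ φ : C(X, ℝ), U = φ ⁻¹' ({0}ᶜ)

/-- `CovDimLE X n` : every finite functionally open cover of `X` has a finite functionally
open refinement of order at most `n + 1` (any `n + 2` distinct members meet emptily). -/
def CovDimLE (X : Type*) [TopologicalSpace X] (n : ℕ) : Prop :=
  ∀ 𝒰 : Finset (Set X), (∀ U ∈ 𝒰, FunctionallyOpen U) → ⋃₀ (𝒰 : Set (Set X)) = univ →
    ∃ 𝒱 : Finset (Set X), (∀ V ∈ 𝒱, FunctionallyOpen V) ∧ ⋃₀ (𝒱 : Set (Set X)) = univ ∧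
      (∀ V ∈ 𝒱, ∃ U ∈ 𝒰, V ⊆ U) ∧
      ∀ 𝒲 : Finset (Set X), 𝒲 ⊆ 𝒱 → n + 1 < 𝒲.card → ⋂₀ (𝒲 : Set (Set X)) = ∅

/-- The covering dimension of `X` as an extended natural number (`⊤` if no finite bound). -/
noncomputable def covDim (X : Type*) [TopologicalSpace X] : ℕ∞ :=
  sInf ((↑) '' {n : ℕ | CovDimLE X n})

/-- The Stone–Čech remainder `βX \ X`. -/
def StoneCechRemainder (X : Type*) [TopologicalSpace X] : Set (StoneCech X) :=
  (range (stoneCechUnit : X → StoneCech X))ᶜ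

/-
A finite functionally open cover of any space admits a partition of unity by `[0,1]`-valued
functions whose cozero sets are exactly its members; these functions extend to `βX`, where
they still sum to `1`. Hence a finite functionally open cover of `X` lifts to one of `βX`
with the same traces on `X`, and conversely traces of covers of `βX` are covers of `X`.
Refinements transfer in both directions without raising the order because `X` is dense
in `βX`: a point of `βX` lying in finitely many cozero sets has a point of `X` lying in all of
them. To refine a cover of `βX` from `X`, first shrink it so that the closures of the new
members lie in the old ones; the cozero set of an extension lies in the closure of its trace.
-/

open Function Finset
open scoped Classical

section Covers

variable {α β ι : Type*}

lemma sUnion_coe_image_eq_univ_iff {𝒰 : Finset ι} {g : ι → Set α} :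
    ⋃₀ (↑(𝒰.image g) : Set (Set α)) = univ ↔ ∀ a, ∃ i ∈ 𝒰, a ∈ g i := by
  simp [eq_univ_iff_forall]

lemma sUnion_image_preimage_eq_univ {f : α → β} {𝒮 : Finset (Set β)}
    (h : ⋃₀ (𝒮 : Set (Set β)) = univ) :
    ⋃₀ (↑(𝒮.image (f ⁻¹' ·)) : Set (Set α)) = univ :=
  sUnion_coe_image_eq_univ_iff.2 fun a => by simpa using sUnion_eq_univ_iff.1 h (f a)

lemma sUnion_image_support_eq_univ {𝒰 : Finset ι} {f : ι → α → ℝ}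
    (hsum : ∀ a, ∑ i ∈ 𝒰, f i a = 1) :
    ⋃₀ (↑(𝒰.image fun i => support (f i)) : Set (Set α)) = univ :=
  sUnion_coe_image_eq_univ_iff.2 fun a =>
    exists_ne_zero_of_sum_ne_zero (by rw [hsum a]; exact one_ne_zero)

lemma forall_card_lt_sInter_eq_empty_iff (𝒱 : Finset (Set α)) (k : ℕ) :
    (∀ 𝒲 : Finset (Set α), 𝒲 ⊆ 𝒱 → k < #𝒲 → ⋂₀ (𝒲 : Set (Set α)) = ∅) ↔
      ∀ a, #{V ∈ 𝒱 | a ∈ V} ≤ k := by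
  refine ⟨fun h a => ?_, fun h 𝒲 h𝒲 hk => ?_⟩
  · by_contra! hlt
    have ha : a ∈ ⋂₀ (↑(𝒱.filter (a ∈ ·)) : Set (Set α)) := fun V hV => (mem_filter.1 hV).2
    rw [h _ (filter_subset _ _) hlt] at ha
    exact ha
  · refine eq_empty_of_forall_notMem fun a ha => hk.not_ge ?_
    exact (Finset.card_le_card fun V hV => mem_filter.2 ⟨h𝒲 hV, ha V hV⟩).trans (h a)

lemma card_filter_mem_image_le (𝒱 : Finset (Set α)) (g : Set α → Set β) {b : β} {a : α}
    (h : ∀ V ∈ 𝒱, b ∈ g V → a ∈ V) : #{W ∈ 𝒱.image g | b ∈ W} ≤ #{V ∈ 𝒱 | a ∈ V} := by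
  rw [filter_image]
  refine card_image_le.trans (card_le_card fun V hV => ?_)
  obtain ⟨hV𝒱, hb⟩ := mem_filter.1 hV
  exact mem_filter.2 ⟨hV𝒱, h V hV𝒱 hb⟩

end Covers

section FunctionallyOpen

variable {X Y : Type*} [TopologicalSpace X] [TopologicalSpace Y]

lemma functionallyOpen_support (f : C(X, ℝ)) : FunctionallyOpen (support f) :=
  ⟨f, support_eq_preimage f⟩

lemma FunctionallyOpen.preimage {U : Set Y} (hU : FunctionallyOpen U) (f : C(X, Y)) :
    FunctionallyOpen (f ⁻¹' U) := by
  obtain ⟨φ, rfl⟩ := hU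
  exact ⟨φ.comp f, rfl⟩

lemma functionallyOpen_setOf_lt (f : C(X, ℝ)) (c : ℝ) : FunctionallyOpen {x | c < f x} := by
  refine ⟨⟨fun x => max (f x - c) 0, by fun_prop⟩, ?_⟩
  ext x
  simp

lemma FunctionallyOpen.exists_unitInterval {U : Set X} (hU : FunctionallyOpen U) :
    ∃ f : C(X, ℝ), (∀ x, f x ∈ Set.Icc (0 : ℝ) 1) ∧ support f = U := by
  obtain ⟨φ, rfl⟩ := hU
  refine ⟨⟨fun x => min |φ x| 1, by fun_prop⟩,
    fun x => ⟨le_min (abs_nonneg _) zero_le_one, min_le_right _ _⟩, ?_⟩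
  ext x
  by_cases hx : φ x = 0
  · simp [hx]
  · simp [hx, (lt_min (abs_pos.2 hx) one_pos).ne']

lemma exists_partition_of_functionallyOpen_cover (𝒰 : Finset (Set X))
    (h𝒰 : ∀ U ∈ 𝒰, FunctionallyOpen U) (hcov : ⋃₀ (𝒰 : Set (Set X)) = univ) :
    ∃ f : Set X → C(X, ℝ), (∀ U ∈ 𝒰, ∀ x, f U x ∈ Set.Icc (0 : ℝ) 1) ∧
      (∀ x, ∑ U ∈ 𝒰, f U x = 1) ∧ ∀ U ∈ 𝒰, support (f U) = U := by
  choose! φ hφ01 hφ using fun U (hU : U ∈ 𝒰) => (h𝒰 U hU).exists_unitInterval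
  set T : X → ℝ := fun x => ∑ U ∈ 𝒰, φ U x
  have hT_pos : ∀ x, 0 < T x := by
    intro x
    obtain ⟨U, hU, hxU⟩ := sUnion_eq_univ_iff.1 hcov x
    rw [← hφ U hU] at hxU
    exact sum_pos' (fun V hV => (hφ01 V hV x).1) ⟨U, hU, (hφ01 U hU x).1.lt_of_ne' hxU⟩
  refine ⟨fun U => ⟨fun x => φ U x / T x,
    (φ U).continuous.div (by fun_prop) fun x => (hT_pos x).ne'⟩, fun U hU x => ?_, fun x => ?_,
    fun U hU => ?_⟩
  · exact ⟨div_nonneg (hφ01 U hU x).1 (hT_pos x).le,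
      div_le_one_of_le₀ (single_le_sum (fun V hV => (hφ01 V hV x).1) hU) (hT_pos x).le⟩
  · change ∑ U ∈ 𝒰, φ U x / T x = 1
    rw [← sum_div]
    exact div_self (hT_pos x).ne'
  · refine (Set.ext fun x => ?_).trans (hφ U hU)
    simp [(hT_pos x).ne']

lemma exists_functionallyOpen_shrinking (𝒰 : Finset (Set X))
    (h𝒰 : ∀ U ∈ 𝒰, FunctionallyOpen U) (hcov : ⋃₀ (𝒰 : Set (Set X)) = univ) :
    ∃ W : Set X → Set X, (∀ U ∈ 𝒰, FunctionallyOpen (W U) ∧ closure (W U) ⊆ U) ∧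
      ⋃₀ (↑(𝒰.image W) : Set (Set X)) = univ := by
  obtain ⟨f, hf01, hsum, hsupp⟩ := exists_partition_of_functionallyOpen_cover 𝒰 h𝒰 hcov
  set c : ℝ := ((#𝒰 : ℝ) + 1)⁻¹
  have hc : 0 < c := by positivity
  refine ⟨fun U => {x | c < f U x}, fun U hU => ⟨functionallyOpen_setOf_lt _ _, ?_⟩,
    sUnion_coe_image_eq_univ_iff.2 fun x => ?_⟩
  · refine (closure_lt_subset_le continuous_const (f U).continuous).trans fun x hx => ?_
    rw [← hsupp U hU]
    exact (hc.trans_le hx).ne'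
  · by_contra! hle
    have hsum_le : ∑ U ∈ 𝒰, f U x ≤ ∑ _U ∈ 𝒰, c := sum_le_sum fun U hU => not_lt.1 (hle U hU)
    rw [sum_const, nsmul_eq_mul] at hsum_le
    have hNc : (#𝒰 : ℝ) * c < 1 := by
      rw [← div_eq_mul_inv, div_lt_one (by positivity)]
      linarith
    linarith [hsum x]

end FunctionallyOpen

lemma DenseRange.exists_forall_mem_imp_apply_mem {α X ι : Type*} [TopologicalSpace X]
    {e : α → X} (he : DenseRange e) (s : Finset ι) {G : ι → Set X}
    (hG : ∀ i ∈ s, IsOpen (G i)) (p : X) : ∃ a, ∀ i ∈ s, p ∈ G i → e a ∈ G i := by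
  have hopen : IsOpen (⋂ i ∈ s.filter (p ∈ G ·), G i) :=
    isOpen_biInter_finset fun i hi => hG i (mem_filter.1 hi).1
  obtain ⟨a, ha⟩ := he.exists_mem_open hopen ⟨p, mem_iInter₂.2 fun i hi => (mem_filter.1 hi).2⟩
  exact ⟨a, fun i hi hp => mem_iInter₂.1 ha i (mem_filter.2 ⟨hi, hp⟩)⟩

section StoneCech

variable {X : Type*} [TopologicalSpace X]

lemma ContinuousMap.exists_stoneCech_extension (f : C(X, ℝ)) {a b : ℝ}
    (hf : ∀ x, f x ∈ Set.Icc a b) : ∃ F : C(StoneCech X, ℝ), F ∘ stoneCechUnit = f := by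
  let g : C(X, Set.Icc a b) := ⟨fun x => ⟨f x, hf x⟩, by fun_prop⟩
  refine ⟨⟨fun p => (stoneCechExtend g.continuous p : Set.Icc a b),
    continuous_subtype_val.comp (continuous_stoneCechExtend _)⟩, funext fun x => ?_⟩
  simp [g]

lemma exists_stoneCech_partition_of_functionallyOpen_cover (𝒰 : Finset (Set X))
    (h𝒰 : ∀ U ∈ 𝒰, FunctionallyOpen U) (hcov : ⋃₀ (𝒰 : Set (Set X)) = univ) :
    ∃ F : Set X → C(StoneCech X, ℝ), (∀ p, ∑ U ∈ 𝒰, F U p = 1) ∧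
      ∀ U ∈ 𝒰, stoneCechUnit ⁻¹' support (F U) = U := by
  obtain ⟨f, hf01, hsum, hsupp⟩ := exists_partition_of_functionallyOpen_cover 𝒰 h𝒰 hcov
  choose! F hF using fun U (hU : U ∈ 𝒰) => (f U).exists_stoneCech_extension (hf01 U hU)
  refine ⟨F, fun p => ?_, fun U hU => ?_⟩
  · have hsum_one : (fun p => ∑ U ∈ 𝒰, F U p) = fun _ => 1 := by
      refine stoneCech_hom_ext (by fun_prop) continuous_const (funext fun x => ?_)
      simp only [comp_apply]
      rw [← hsum x]
      exact sum_congr rfl fun U hU => congrFun (hF U hU) x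
    exact congrFun hsum_one p
  · rw [← support_comp_eq_preimage, hF U hU, hsupp U hU]

variable {n : ℕ}

lemma CovDimLE.of_stoneCech (h : CovDimLE (StoneCech X) n) : CovDimLE X n := by
  intro 𝒰 h𝒰 hcov
  obtain ⟨F, hsum, hpre⟩ := exists_stoneCech_partition_of_functionallyOpen_cover 𝒰 h𝒰 hcov
  obtain ⟨𝒱, h𝒱, hcov𝒱, href, hord⟩ := h (𝒰.image fun U => support (F U))
    (by simpa using fun U _ => functionallyOpen_support (F U)) (sUnion_image_support_eq_univ hsum)
  refine ⟨𝒱.image (stoneCechUnit ⁻¹' ·), ?_, sUnion_image_preimage_eq_univ hcov𝒱, ?_, ?_⟩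
  · simpa using fun V hV => (h𝒱 V hV).preimage ⟨_, continuous_stoneCechUnit⟩
  · refine Finset.forall_mem_image.2 fun V hV => ?_
    obtain ⟨_, hB, hVB⟩ := href V hV
    obtain ⟨U, hU, rfl⟩ := mem_image.1 hB
    exact ⟨U, hU, hpre U hU ▸ preimage_mono hVB⟩
  · rw [forall_card_lt_sInter_eq_empty_iff] at hord ⊢
    exact fun x => (card_filter_mem_image_le 𝒱 (stoneCechUnit ⁻¹' ·) fun V _ hx => hx).trans (hord (stoneCechUnit x))

lemma CovDimLE.stoneCech (h : CovDimLE X n) : CovDimLE (StoneCech X) n := by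
  intro 𝒰 h𝒰 hcov
  obtain ⟨W, hW, hWcov⟩ := exists_functionallyOpen_shrinking 𝒰 h𝒰 hcov
  obtain ⟨𝒱, h𝒱, hcov𝒱, href, hord⟩ := h ((𝒰.image W).image (stoneCechUnit ⁻¹' ·))
    (by simpa using fun U hU => (hW U hU).1.preimage ⟨_, continuous_stoneCechUnit⟩)
    (sUnion_image_preimage_eq_univ hWcov)
  obtain ⟨F, hsum, hpre⟩ := exists_stoneCech_partition_of_functionallyOpen_cover 𝒱 h𝒱 hcov𝒱
  refine ⟨𝒱.image fun V => support (F V),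
    by simpa using fun V _ => functionallyOpen_support (F V), sUnion_image_support_eq_univ hsum,
    ?_, ?_⟩
  · refine Finset.forall_mem_image.2 fun V hV => ?_
    obtain ⟨_, hT, hVT⟩ := href V hV
    obtain ⟨U, hU, rfl⟩ : ∃ U ∈ 𝒰, stoneCechUnit ⁻¹' W U = _ := by simpa using hT
    refine ⟨U, hU, ?_⟩
    calc support (F V)
        ⊆ closure (stoneCechUnit '' (stoneCechUnit ⁻¹' support (F V))) :=
          denseRange_stoneCechUnit.subset_closure_image_preimage_of_isOpen
            (isOpen_compl_singleton.preimage (F V).continuous)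
      _ ⊆ closure (W U) :=
          closure_mono ((image_mono ((hpre V hV).trans_subset hVT)).trans (image_preimage_subset _ _))
      _ ⊆ U := (hW U hU).2
  · rw [forall_card_lt_sInter_eq_empty_iff] at hord ⊢
    intro p
    obtain ⟨x, hx⟩ := denseRange_stoneCechUnit.exists_forall_mem_imp_apply_mem 𝒱
      (fun V _ => isOpen_compl_singleton.preimage (F V).continuous) p
    refine (card_filter_mem_image_le 𝒱 _ fun V hV hp => ?_).trans (hord x)
    rw [← hpre V hV]
    exact hx V hV hp

end StoneCech

theorem covDim_eq_covDim_stoneCech_general (X : Type u) [TopologicalSpace X] :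
    covDim X = covDim (StoneCech X) := by
  have hdims : {n | CovDimLE X n} = {n | CovDimLE (StoneCech X) n} :=
    Set.ext fun _ => ⟨CovDimLE.stoneCech, CovDimLE.of_stoneCech⟩
  rw [covDim, covDim, hdims]

/-- For every Tychonoff space `X`, the covering dimension of `X` equals the covering
dimension of its Stone–Čech compactification `βX`. -/
theorem covDim_eq_covDim_stoneCech (X : Type u) [TopologicalSpace X] [T35Space X] :
    covDim X = covDim (StoneCech X) :=
  covDim_eq_covDim_stoneCech_general X
end

section
/- For any compact Hausdorff spaces X₁ and X₂, dim(X₁ × X₂) ≤ dim X₁ + dim X₂. -/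
open Set Topology

universe u v w

namespace HemAux


/-- partial sums -/
def pcs (u : ℕ → ℝ) (k : ℕ) : ℝ := ∑ i ∈ Finset.range k, u i

lemma pcs_succ (u : ℕ → ℝ) (k : ℕ) : pcs u (k+1) = pcs u k + u k := by
  simp [pcs, Finset.sum_range_succ]

lemma pcs_mono (u : ℕ → ℝ) (hu : ∀ i, 0 ≤ u i) : Monotone (pcs u) := by
  intro a b hab
  simpa [pcs] using Finset.sum_le_sum_of_subset_of_nonneg
    (Finset.range_subset_range.2 hab) (fun i _ _ => hu i)

lemma max_zero_sub (b t : ℝ) : max 0 (b - t) = b - min b t := by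
  rcases le_total b t with h | h <;> simp [max_eq_left, min_eq_left, min_eq_right, h] <;> linarith

lemma interval_sum' (g : ℕ → ℝ) (hmono : Monotone g) :
    ∀ (q : ℕ) (a b : ℝ), g 0 ≤ a → a ≤ b → b ≤ g q →
    ∑ j ∈ Finset.range q, max 0 (min b (g (j+1)) - max a (g j)) = b - a := by
  intro q
  induction q with
  | zero =>
    intro a b h1 h2 h3
    simp only [Finset.range_zero, Finset.sum_empty]
    have : a = b := le_antisymm h2 (h3.trans h1)
    linarith
  | succ q ih =>
    intro a b h1 h2 h3
    rw [Finset.sum_range_succ]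
    rcases le_total a (g q) with hc | hc
    · -- a ≤ g q
      have hb' : ∑ j ∈ Finset.range q, max 0 (min b (g (j+1)) - max a (g j))
          = ∑ j ∈ Finset.range q, max 0 (min (min b (g q)) (g (j+1)) - max a (g j)) := by
        apply Finset.sum_congr rfl
        intro j hj
        have hjq : j + 1 ≤ q := Finset.mem_range.1 hj
        have : min (min b (g q)) (g (j+1)) = min b (g (j+1)) := by
          rw [min_assoc]
          congr 1
          exact min_eq_right (hmono hjq)
        rw [this]
      rw [hb', ih a (min b (g q)) h1 (le_min h2 hc) (min_le_right _ _)]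
      have hmaxa : max a (g q) = g q := max_eq_right hc
      have hminb : min b (g (q+1)) = b := min_eq_left h3
      rw [hmaxa, hminb, max_zero_sub]
      ring
    · -- g q ≤ a
      have hz : ∑ j ∈ Finset.range q, max 0 (min b (g (j+1)) - max a (g j)) = 0 := by
        apply Finset.sum_eq_zero
        intro j hj
        have hjq : j + 1 ≤ q := Finset.mem_range.1 hj
        have : min b (g (j+1)) ≤ max a (g j) := by
          calc min b (g (j+1)) ≤ g (j+1) := min_le_right _ _
            _ ≤ g q := hmono hjq
            _ ≤ a := hc
            _ ≤ max a (g j) := le_max_left _ _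
        exact max_eq_left (by linarith)
      rw [hz]
      have hmaxa : max a (g q) = a := max_eq_left hc
      have hminb : min b (g (q+1)) = b := min_eq_left h3
      rw [hmaxa, hminb, max_eq_right (by linarith)]
      ring

/-- the comonotone coupling -/
def cpl (u v : ℕ → ℝ) (i j : ℕ) : ℝ :=
  max 0 (min (pcs u (i+1)) (pcs v (j+1)) - max (pcs u i) (pcs v j))

lemma cpl_nonneg (u v : ℕ → ℝ) (i j : ℕ) : 0 ≤ cpl u v i j := le_max_left _ _

lemma cpl_total (u v : ℕ → ℝ) (p q : ℕ) (hu : ∀ i, 0 ≤ u i) (hv : ∀ j, 0 ≤ v j)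
    (h1 : pcs u p = 1) (h2 : pcs v q = 1) :
    ∑ i ∈ Finset.range p, ∑ j ∈ Finset.range q, cpl u v i j = 1 := by
  have hrow : ∀ i ∈ Finset.range p, ∑ j ∈ Finset.range q, cpl u v i j = u i := by
    intro i hi
    have hip : i + 1 ≤ p := Finset.mem_range.1 hi
    have := interval_sum' (pcs v) (pcs_mono v hv) q (pcs u i) (pcs u (i+1))
      (by simp [pcs]; exact Finset.sum_nonneg fun k _ => hu k)
      (pcs_mono u hu (Nat.le_succ i))
      (by rw [h2]; rw [← h1]; exact pcs_mono u hu hip)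
    rw [show (∑ j ∈ Finset.range q, cpl u v i j) =
      ∑ j ∈ Finset.range q, max 0 (min (pcs u (i+1)) (pcs v (j+1)) - max (pcs u i) (pcs v j)) from rfl]
    rw [this, pcs_succ]; ring
  rw [Finset.sum_congr rfl hrow, ← pcs, h1]

lemma cpl_pos_of_ne (u v : ℕ → ℝ) (i j : ℕ) (h : cpl u v i j ≠ 0) : 0 < cpl u v i j :=
  lt_of_le_of_ne (cpl_nonneg u v i j) (Ne.symm h)

lemma cpl_supp (u v : ℕ → ℝ) (i j : ℕ) (h : 0 < cpl u v i j) : 0 < u i ∧ 0 < v j := by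
  have h' : max (pcs u i) (pcs v j) < min (pcs u (i+1)) (pcs v (j+1)) := by
    by_contra hc
    push_neg at hc
    have : cpl u v i j = 0 := max_eq_left (by unfold cpl at *; linarith)
    rw [this] at h; exact lt_irrefl _ h
  constructor
  · have := lt_of_le_of_lt (le_max_left (pcs u i) (pcs v j))
      (lt_of_lt_of_le h' (min_le_left _ _))
    rw [pcs_succ] at this; linarith
  · have := lt_of_le_of_lt (le_max_right (pcs u i) (pcs v j))
      (lt_of_lt_of_le h' (min_le_right _ _))
    rw [pcs_succ] at this; linarith

lemma cpl_chain (u v : ℕ → ℝ) (hu : ∀ i, 0 ≤ u i) (hv : ∀ j, 0 ≤ v j)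
    {i j i' j' : ℕ} (h : 0 < cpl u v i j) (h' : 0 < cpl u v i' j')
    (hii : i < i') (hjj : j' < j) : False := by
  have H : max (pcs u i) (pcs v j) < min (pcs u (i+1)) (pcs v (j+1)) := by
    by_contra hc; push_neg at hc
    have : cpl u v i j = 0 := max_eq_left (by unfold cpl at *; linarith)
    rw [this] at h; exact lt_irrefl _ h
  have H' : max (pcs u i') (pcs v j') < min (pcs u (i'+1)) (pcs v (j'+1)) := by
    by_contra hc; push_neg at hc
    have : cpl u v i' j' = 0 := max_eq_left (by unfold cpl at *; linarith)
    rw [this] at h'; exact lt_irrefl _ h'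
  have h1 : pcs v j < pcs u (i+1) :=
    lt_of_le_of_lt (le_max_right _ _) (lt_of_lt_of_le H (min_le_left _ _))
  have h2 : pcs u i' < pcs v (j'+1) :=
    lt_of_le_of_lt (le_max_left _ _) (lt_of_lt_of_le H' (min_le_right _ _))
  have h3 : pcs u (i+1) ≤ pcs u i' := pcs_mono u hu hii
  have h4 : pcs v (j'+1) ≤ pcs v j := pcs_mono v hv hjj
  linarith



lemma chain_card (S : Finset (ℕ × ℕ)) (hS : S.Nonempty)
    (hchain : ∀ a ∈ S, ∀ b ∈ S, a ≤ b ∨ b ≤ a) :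
    S.card + 1 ≤ (S.image Prod.fst).card + (S.image Prod.snd).card := by
  induction S using Finset.strongInduction with
  | _ S ih =>
  obtain ⟨m, hm, hmax⟩ := S.exists_max_image (fun a => a.1 + a.2) hS
  have hle : ∀ a ∈ S, a ≤ m := by
    intro a ha
    rcases hchain a ha m hm with h | h
    · exact h
    · have h1 := hmax a ha
      have : a = m := by
        have := h.1; have := h.2
        exact Prod.ext (by omega) (by omega)
      exact this.le
  set S' := S.erase m with hS'
  by_cases hS'e : S' = ∅
  · have hcard : S.card = 1 := by
      have : S ⊆ {m} := by
        intro a ha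
        by_contra hne
        have : a ∈ S' := Finset.mem_erase.2 ⟨by simpa using hne, ha⟩
        simp [hS'e] at this
      have h1 : S = {m} := Finset.Subset.antisymm this (Finset.singleton_subset_iff.2 hm)
      simp [h1]
    have h1 : 1 ≤ (S.image Prod.fst).card := Finset.card_pos.2 ⟨m.1, Finset.mem_image_of_mem _ hm⟩
    have h2 : 1 ≤ (S.image Prod.snd).card := Finset.card_pos.2 ⟨m.2, Finset.mem_image_of_mem _ hm⟩
    omega
  · have hS'ne : S'.Nonempty := Finset.nonempty_iff_ne_empty.2 hS'e
    have hsub : S' ⊂ S := Finset.erase_ssubset hm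
    have hchain' : ∀ a ∈ S', ∀ b ∈ S', a ≤ b ∨ b ≤ a := fun a ha b hb =>
      hchain a (Finset.mem_of_mem_erase ha) b (Finset.mem_of_mem_erase hb)
    have IH := ih S' hsub hS'ne hchain'
    have hcard : S.card = S'.card + 1 := by
      rw [hS', Finset.card_erase_of_mem hm]
      have : 1 ≤ S.card := Finset.card_pos.2 hS
      omega
    -- claim: m.1 ∉ S'.image fst or m.2 ∉ S'.image snd
    have hclaim : m.1 ∉ S'.image Prod.fst ∨ m.2 ∉ S'.image Prod.snd := by
      by_contra hc
      push_neg at hc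
      obtain ⟨a, ha, ha1⟩ := Finset.mem_image.1 hc.1
      obtain ⟨b, hb, hb2⟩ := Finset.mem_image.1 hc.2
      have haS := Finset.mem_of_mem_erase ha
      have hbS := Finset.mem_of_mem_erase hb
      have ham : a ≠ m := (Finset.mem_erase.1 ha).1
      have hbm : b ≠ m := (Finset.mem_erase.1 hb).1
      have ha2 : a.2 < m.2 := by
        have := (hle a haS).2
        rcases lt_or_eq_of_le this with h | h
        · exact h
        · exact absurd (Prod.ext ha1 h) ham
      have hb1 : b.1 < m.1 := by
        have := (hle b hbS).1
        rcases lt_or_eq_of_le this with h | h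
        · exact h
        · exact absurd (Prod.ext h hb2) hbm
      rcases hchain a haS b hbS with h | h
      · have : m.1 ≤ b.1 := ha1 ▸ h.1
        omega
      · have : m.2 ≤ a.2 := hb2 ▸ h.2
        omega
    have himg1 : S'.image Prod.fst ⊆ S.image Prod.fst :=
      Finset.image_subset_image (Finset.erase_subset _ _)
    have himg2 : S'.image Prod.snd ⊆ S.image Prod.snd :=
      Finset.image_subset_image (Finset.erase_subset _ _)
    rcases hclaim with hc | hc
    · have hss : S'.image Prod.fst ⊂ S.image Prod.fst :=
        Finset.ssubset_iff_of_subset himg1 |>.2 ⟨m.1, Finset.mem_image_of_mem _ hm, hc⟩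
      have := Finset.card_lt_card hss
      have := Finset.card_le_card himg2
      omega
    · have hss : S'.image Prod.snd ⊂ S.image Prod.snd :=
        Finset.ssubset_iff_of_subset himg2 |>.2 ⟨m.2, Finset.mem_image_of_mem _ hm, hc⟩
      have := Finset.card_lt_card hss
      have := Finset.card_le_card himg1
      omega



variable {X : Type*} [TopologicalSpace X]

lemma fo_isOpen {U : Set X} (h : FunctionallyOpen U) : IsOpen U := by
  obtain ⟨φ, rfl⟩ := h
  exact (isOpen_compl_singleton).preimage φ.continuous

lemma fo_biInter {ι : Type*} (t : Finset ι) (f : ι → Set X)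
    (h : ∀ i ∈ t, FunctionallyOpen (f i)) : FunctionallyOpen (⋂ i ∈ t, f i) := by
  classical
  have h' : ∀ i : {x // x ∈ t}, FunctionallyOpen (f i.1) := fun i => h i.1 i.2
  choose φ hφ using h'
  refine ⟨⟨fun x => ∏ i ∈ t.attach, φ i x, ?_⟩, ?_⟩
  · exact continuous_finset_prod _ fun i _ => (φ i).continuous
  · ext x
    simp only [ContinuousMap.coe_mk, Set.mem_preimage, Set.mem_compl_iff,
      Set.mem_singleton_iff, Set.mem_iInter]
    rw [← not_iff_not, not_not, Finset.prod_eq_zero_iff]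
    push_neg
    constructor
    · rintro ⟨i, hi, hxi⟩
      refine ⟨⟨i, hi⟩, Finset.mem_attach _ _, ?_⟩
      have := hφ ⟨i, hi⟩
      by_contra hne
      exact hxi (by rw [this]; simpa using hne)
    · rintro ⟨a, -, ha0⟩
      refine ⟨a.1, a.2, ?_⟩
      rw [hφ a]
      simpa using ha0

lemma fo_nbhd [CompactSpace X] [T2Space X] {U : Set X} (hU : IsOpen U) {x : X} (hx : x ∈ U) :
    ∃ W : Set X, FunctionallyOpen W ∧ x ∈ W ∧ W ⊆ U := by
  obtain ⟨f, hf0, hf1, -⟩ := exists_continuous_zero_one_of_isClosed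
    (isClosed_compl_iff.2 hU) (isClosed_singleton (x := x))
    (by simp [Set.disjoint_singleton_right, hx])
  refine ⟨f ⁻¹' ({0}ᶜ), ⟨f, rfl⟩, ?_, ?_⟩
  · have : f x = 1 := hf1 rfl
    simp [Set.mem_preimage, this]
  · intro y hy
    by_contra hyU
    have : f y = 0 := hf0 hyU
    simp [Set.mem_preimage, this] at hy



variable {X : Type*} [TopologicalSpace X]

lemma grid {X Y : Type*} [TopologicalSpace X] [TopologicalSpace Y] [CompactSpace X]
    [CompactSpace Y] [T2Space X] [T2Space Y]
    (𝒰 : Finset (Set (X × Y))) (hopen : ∀ U ∈ 𝒰, IsOpen U)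
    (hcov : ⋃₀ (𝒰 : Set (Set (X × Y))) = univ) :
    ∃ (𝒜 : Finset (Set X)) (ℬ : Finset (Set Y)),
      (∀ A ∈ 𝒜, FunctionallyOpen A) ∧ (∀ B ∈ ℬ, FunctionallyOpen B) ∧
      ⋃₀ (𝒜 : Set (Set X)) = univ ∧ ⋃₀ (ℬ : Set (Set Y)) = univ ∧
      (∀ A ∈ 𝒜, ∀ B ∈ ℬ, ∃ U ∈ 𝒰, A ×ˢ B ⊆ U) := by
  classical
  have step1 : ∀ x : X, ∀ y : Y, ∃ A : Set X, ∃ B : Set Y,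
      FunctionallyOpen A ∧ FunctionallyOpen B ∧ x ∈ A ∧ y ∈ B ∧
      ∃ U ∈ 𝒰, A ×ˢ B ⊆ U := by
    intro x y
    have : (x, y) ∈ ⋃₀ (𝒰 : Set (Set (X × Y))) := by rw [hcov]; trivial
    obtain ⟨U, hU𝒰, hxyU⟩ := this
    obtain ⟨u, v, hu, hv, hxu, hyv, huv⟩ := isOpen_prod_iff.1 (hopen U hU𝒰) x y hxyU
    obtain ⟨A, hA, hxA, hAu⟩ := fo_nbhd hu hxu
    obtain ⟨B, hB, hyB, hBv⟩ := fo_nbhd hv hyv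
    exact ⟨A, B, hA, hB, hxA, hyB, U, hU𝒰,
      (Set.prod_mono hAu hBv).trans huv⟩
  choose Af Bf hAf hBf hxAf hyBf hUf using step1
  -- tube: for each x, finitely many y's cover Y
  have step2 : ∀ x : X, ∃ t : Finset Y, univ ⊆ ⋃ y ∈ t, Bf x y := by
    intro x
    exact isCompact_univ.elim_finite_subcover (fun y => Bf x y)
      (fun y => fo_isOpen (hBf x y))
      (fun y _ => Set.mem_iUnion.2 ⟨y, hyBf x y⟩)
  choose t ht using step2
  set N : X → Set X := fun x => ⋂ y ∈ t x, Af x y with hN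
  have hNfo : ∀ x, FunctionallyOpen (N x) := fun x => fo_biInter (t x) _ (fun y _ => hAf x y)
  have hxN : ∀ x, x ∈ N x := fun x => Set.mem_iInter₂.2 fun y _ => hxAf x y
  obtain ⟨s, hs⟩ := isCompact_univ.elim_finite_subcover N (fun x => fo_isOpen (hNfo x))
    (fun x _ => Set.mem_iUnion.2 ⟨x, hxN x⟩)
  refine ⟨s.image N,
    (Fintype.piFinset fun i : {x // x ∈ s} => t i.1).image
      (fun g => ⋂ i ∈ (Finset.univ : Finset {x // x ∈ s}), Bf i.1 (g i)),
    ?_, ?_, ?_, ?_, ?_⟩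
  · rintro A hA
    obtain ⟨x, -, rfl⟩ := Finset.mem_image.1 hA
    exact hNfo x
  · rintro B hB
    obtain ⟨g, -, rfl⟩ := Finset.mem_image.1 hB
    exact fo_biInter _ _ (fun i _ => hBf i.1 (g i))
  · apply Set.eq_univ_of_univ_subset
    intro x hx
    obtain ⟨W, hW, hxW⟩ := Set.mem_iUnion₂.1 (hs hx)
    exact ⟨N W, by simp [Finset.mem_image]; exact ⟨W, hW, rfl⟩, hxW⟩
  · apply Set.eq_univ_of_univ_subset
    intro y _
    have hg : ∀ i : {x // x ∈ s}, ∃ y' ∈ t i.1, y ∈ Bf i.1 y' := by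
      intro i
      have := ht i.1 (Set.mem_univ y)
      simpa using Set.mem_iUnion₂.1 this
    choose g hg1 hg2 using hg
    refine ⟨⋂ i ∈ (Finset.univ : Finset {x // x ∈ s}), Bf i.1 (g i), ?_, ?_⟩
    · apply Finset.mem_coe.2
      apply Finset.mem_image.2
      exact ⟨g, Fintype.mem_piFinset.2 hg1, rfl⟩
    · exact Set.mem_iInter₂.2 fun i _ => hg2 i
  · rintro A hA B hB
    obtain ⟨x₀, hx₀, rfl⟩ := Finset.mem_image.1 hA
    obtain ⟨g, hg, rfl⟩ := Finset.mem_image.1 hB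
    have hgmem := Fintype.mem_piFinset.1 hg
    set i₀ : {x // x ∈ s} := ⟨x₀, hx₀⟩
    obtain ⟨U, hU𝒰, hsub⟩ := hUf x₀ (g i₀)
    refine ⟨U, hU𝒰, ?_⟩
    refine (Set.prod_mono ?_ ?_).trans hsub
    · exact Set.biInter_subset_of_mem (hgmem i₀)
    · exact Set.biInter_subset_of_mem (Finset.mem_univ i₀)



open scoped Classical in
/-- order bound at a point -/
lemma point_order {X : Type*} [TopologicalSpace X] {n : ℕ} {𝒜 : Finset (Set X)}
    (hord : ∀ 𝒲 : Finset (Set X), 𝒲 ⊆ 𝒜 → n + 1 < 𝒲.card → ⋂₀ (𝒲 : Set (Set X)) = ∅)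
    (x : X) : (𝒜.filter (fun A => x ∈ A)).card ≤ n + 1 := by
  classical
  by_contra h
  push_neg at h
  have hemp := hord (𝒜.filter (fun A => x ∈ A)) (Finset.filter_subset _ _) h
  have hx : x ∈ ⋂₀ ((𝒜.filter (fun A => x ∈ A) : Finset (Set X)) : Set (Set X)) := by
    intro A hA
    exact (Finset.mem_filter.1 (Finset.mem_coe.1 hA)).2
  rw [hemp] at hx
  exact hx

lemma covDimLE_prod {X Y : Type*} [TopologicalSpace X] [TopologicalSpace Y]
    [CompactSpace X] [CompactSpace Y] [T2Space X] [T2Space Y] {m n : ℕ}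
    (hX : CovDimLE X m) (hY : CovDimLE Y n) : CovDimLE (X × Y) (m + n) := by
  classical
  intro 𝒰 h𝒰fo h𝒰cov
  obtain ⟨𝒜₀, ℬ₀, hA₀fo, hB₀fo, hA₀cov, hB₀cov, hgrid⟩ :=
    grid 𝒰 (fun U hU => fo_isOpen (h𝒰fo U hU)) h𝒰cov
  obtain ⟨𝒜, hAfo, hAcov, hAref, hAord⟩ := hX 𝒜₀ hA₀fo hA₀cov
  obtain ⟨ℬ, hBfo, hBcov, hBref, hBord⟩ := hY ℬ₀ hB₀fo hB₀cov
  set p := 𝒜.card with hp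
  set q := ℬ.card with hq
  set eA : Fin p → Set X := fun i => (𝒜.equivFin.symm i : Set X) with heA
  set eB : Fin q → Set Y := fun j => (ℬ.equivFin.symm j : Set Y) with heB
  have heAmem : ∀ i, eA i ∈ 𝒜 := fun i => (𝒜.equivFin.symm i).2
  have heBmem : ∀ j, eB j ∈ ℬ := fun j => (ℬ.equivFin.symm j).2
  have heAinj : Function.Injective eA :=
    fun i i' h => 𝒜.equivFin.symm.injective (Subtype.coe_injective h)
  have heBinj : Function.Injective eB :=
    fun j j' h => ℬ.equivFin.symm.injective (Subtype.coe_injective h)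
  have heAsurj : ∀ A ∈ 𝒜, ∃ i, eA i = A := by
    intro A hA
    exact ⟨𝒜.equivFin ⟨A, hA⟩, by simp [heA]⟩
  have heBsurj : ∀ B ∈ ℬ, ∃ j, eB j = B := by
    intro B hB
    exact ⟨ℬ.equivFin ⟨B, hB⟩, by simp [heB]⟩
  have hfA : ∀ i : Fin p, ∃ f : C(X, ℝ), eA i = f ⁻¹' ({0}ᶜ) := fun i => hAfo _ (heAmem i)
  have hfB : ∀ j : Fin q, ∃ f : C(Y, ℝ), eB j = f ⁻¹' ({0}ᶜ) := fun j => hBfo _ (heBmem j)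
  choose fA hfA using hfA
  choose fB hfB using hfB
  set TA : X → ℝ := fun x => ∑ i : Fin p, |fA i x| with hTA
  set TB : Y → ℝ := fun y => ∑ j : Fin q, |fB j y| with hTB
  have hTAc : Continuous TA := continuous_finset_sum _ fun i _ => (fA i).continuous.abs
  have hTBc : Continuous TB := continuous_finset_sum _ fun j _ => (fB j).continuous.abs
  have hTApos : ∀ x, 0 < TA x := by
    intro x
    have : x ∈ ⋃₀ (𝒜 : Set (Set X)) := by rw [hAcov]; trivial
    obtain ⟨A, hA, hxA⟩ := this
    obtain ⟨i, rfl⟩ := heAsurj A hA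
    have : fA i x ≠ 0 := by
      have := hfA i ▸ hxA
      simpa using this
    exact Finset.sum_pos' (fun i _ => abs_nonneg _)
      ⟨i, Finset.mem_univ i, abs_pos.2 this⟩
  have hTBpos : ∀ y, 0 < TB y := by
    intro y
    have : y ∈ ⋃₀ (ℬ : Set (Set Y)) := by rw [hBcov]; trivial
    obtain ⟨B, hB, hyB⟩ := this
    obtain ⟨j, rfl⟩ := heBsurj B hB
    have : fB j y ≠ 0 := by
      have := hfB j ▸ hyB
      simpa using this
    exact Finset.sum_pos' (fun j _ => abs_nonneg _)
      ⟨j, Finset.mem_univ j, abs_pos.2 this⟩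
  set u : X → ℕ → ℝ := fun x i => if h : i < p then |fA ⟨i, h⟩ x| / TA x else 0 with hu
  set v : Y → ℕ → ℝ := fun y j => if h : j < q then |fB ⟨j, h⟩ y| / TB y else 0 with hv
  have hu0 : ∀ x i, 0 ≤ u x i := by
    intro x i
    rw [hu]
    dsimp only
    split
    · exact div_nonneg (abs_nonneg _) (hTApos x).le
    · exact le_refl 0
  have hv0 : ∀ y j, 0 ≤ v y j := by
    intro y j
    rw [hv]
    dsimp only
    split
    · exact div_nonneg (abs_nonneg _) (hTBpos y).le
    · exact le_refl 0
  have husum : ∀ x, pcs (u x) p = 1 := by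
    intro x
    rw [pcs, Finset.sum_range (fun i => u x i)]
    have : ∀ i : Fin p, u x i.1 = |fA i x| / TA x := by
      intro i
      rw [hu]
      simp [i.isLt]
    rw [Finset.sum_congr rfl (fun i _ => this i), ← Finset.sum_div]
    exact div_self (hTApos x).ne'
  have hvsum : ∀ y, pcs (v y) q = 1 := by
    intro y
    rw [pcs, Finset.sum_range (fun j => v y j)]
    have : ∀ j : Fin q, v y j.1 = |fB j y| / TB y := by
      intro j
      rw [hv]
      simp [j.isLt]
    rw [Finset.sum_congr rfl (fun j _ => this j), ← Finset.sum_div]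
    exact div_self (hTBpos y).ne'
  have husupp : ∀ x i (h : i < p), 0 < u x i → x ∈ eA ⟨i, h⟩ := by
    intro x i h hpos
    rw [hu] at hpos
    simp only [dif_pos h] at hpos
    have : fA ⟨i, h⟩ x ≠ 0 := by
      intro h0
      rw [h0] at hpos
      simp at hpos
    rw [hfA ⟨i, h⟩]
    simpa using this
  have hvsupp : ∀ y j (h : j < q), 0 < v y j → y ∈ eB ⟨j, h⟩ := by
    intro y j h hpos
    rw [hv] at hpos
    simp only [dif_pos h] at hpos
    have : fB ⟨j, h⟩ y ≠ 0 := by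
      intro h0
      rw [h0] at hpos
      simp at hpos
    rw [hfB ⟨j, h⟩]
    simpa using this
  -- continuity of partial sums
  have hcu : ∀ k, Continuous fun z : X × Y => pcs (u z.1) k := by
    intro k
    unfold pcs
    apply continuous_finset_sum
    intro i _
    by_cases h : i < p
    · have : (fun z : X × Y => u z.1 i) =
        fun z : X × Y => |fA ⟨i, h⟩ z.1| / TA z.1 := by
        funext z
        rw [hu]
        simp [h]
      rw [this]
      exact (((fA ⟨i, h⟩).continuous.comp continuous_fst).abs).div
        (hTAc.comp continuous_fst) (fun z => (hTApos z.1).ne')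
    · have : (fun z : X × Y => u z.1 i) = fun _ : X × Y => (0 : ℝ) := by
        funext z
        rw [hu]
        simp [h]
      rw [this]
      exact continuous_const
  have hcv : ∀ k, Continuous fun z : X × Y => pcs (v z.2) k := by
    intro k
    unfold pcs
    apply continuous_finset_sum
    intro j _
    by_cases h : j < q
    · have : (fun z : X × Y => v z.2 j) =
        fun z : X × Y => |fB ⟨j, h⟩ z.2| / TB z.2 := by
        funext z
        rw [hv]
        simp [h]
      rw [this]
      exact (((fB ⟨j, h⟩).continuous.comp continuous_snd).abs).div
        (hTBc.comp continuous_snd) (fun z => (hTBpos z.2).ne')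
    · have : (fun z : X × Y => v z.2 j) = fun _ : X × Y => (0 : ℝ) := by
        funext z
        rw [hv]
        simp [h]
      rw [this]
      exact continuous_const
  have hcc : ∀ i j : ℕ, Continuous fun z : X × Y => cpl (u z.1) (v z.2) i j := by
    intro i j
    unfold cpl
    exact continuous_const.max (((hcu (i+1)).min (hcv (j+1))).sub ((hcu i).max (hcv j)))
  set Vf : ℕ × ℕ → Set (X × Y) := fun ij => {z | cpl (u z.1) (v z.2) ij.1 ij.2 ≠ 0} with hVf
  refine ⟨(Finset.range p ×ˢ Finset.range q).image Vf, ?_, ?_, ?_, ?_⟩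
  · rintro V hV
    obtain ⟨ij, -, rfl⟩ := Finset.mem_image.1 hV
    refine ⟨⟨fun z => cpl (u z.1) (v z.2) ij.1 ij.2, hcc ij.1 ij.2⟩, ?_⟩
    ext z
    simp [hVf]
  · apply Set.eq_univ_of_univ_subset
    rintro z -
    have htot := cpl_total (u z.1) (v z.2) p q (hu0 z.1) (hv0 z.2) (husum z.1) (hvsum z.2)
    have : ∃ i ∈ Finset.range p, ∃ j ∈ Finset.range q, cpl (u z.1) (v z.2) i j ≠ 0 := by
      by_contra hc
      push_neg at hc
      rw [Finset.sum_eq_zero (fun i hi => Finset.sum_eq_zero (fun j hj => hc i hi j hj))] at htot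
      norm_num at htot
    obtain ⟨i, hi, j, hj, hne⟩ := this
    refine ⟨Vf (i, j), ?_, hne⟩
    apply Finset.mem_coe.2
    exact Finset.mem_image.2 ⟨(i, j), Finset.mem_product.2 ⟨hi, hj⟩, rfl⟩
  · rintro V hV
    obtain ⟨ij, hij, rfl⟩ := Finset.mem_image.1 hV
    obtain ⟨hi, hj⟩ := Finset.mem_product.1 hij
    rw [Finset.mem_range] at hi hj
    obtain ⟨A₀, hA₀, hsubA⟩ := hAref (eA ⟨ij.1, hi⟩) (heAmem _)
    obtain ⟨B₀, hB₀, hsubB⟩ := hBref (eB ⟨ij.2, hj⟩) (heBmem _)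
    obtain ⟨U, hU, hsubU⟩ := hgrid A₀ hA₀ B₀ hB₀
    refine ⟨U, hU, ?_⟩
    intro z hz
    have hpos := cpl_pos_of_ne _ _ _ _ hz
    obtain ⟨hu', hv'⟩ := cpl_supp _ _ _ _ hpos
    apply hsubU
    exact Set.mk_mem_prod (hsubA (husupp z.1 ij.1 hi hu')) (hsubB (hvsupp z.2 ij.2 hj hv'))
  · intro 𝒲 h𝒲sub h𝒲card
    by_contra hne
    obtain ⟨z, hz⟩ := Set.nonempty_iff_ne_empty.2 hne
    set S : Finset (ℕ × ℕ) := (Finset.range p ×ˢ Finset.range q).filter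
      (fun ij => 0 < cpl (u z.1) (v z.2) ij.1 ij.2) with hS
    have hWS : 𝒲.card ≤ S.card := by
      apply Finset.card_le_card_of_surjOn Vf
      intro W hW
      obtain ⟨ij, hij, rfl⟩ := Finset.mem_image.1 (h𝒲sub hW)
      have hzW : z ∈ Vf ij := hz _ hW
      refine ⟨ij, ?_, rfl⟩
      apply Finset.mem_coe.2
      exact Finset.mem_filter.2 ⟨hij, cpl_pos_of_ne _ _ _ _ hzW⟩
    have hchain : ∀ a ∈ S, ∀ b ∈ S, a ≤ b ∨ b ≤ a := by
      intro a ha b hb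
      have ha' := (Finset.mem_filter.1 ha).2
      have hb' := (Finset.mem_filter.1 hb).2
      rcases lt_trichotomy a.1 b.1 with h1 | h1 | h1
      · left
        refine ⟨h1.le, ?_⟩
        by_contra h2
        push_neg at h2
        exact cpl_chain _ _ (hu0 z.1) (hv0 z.2) ha' hb' h1 h2
      · rcases le_total a.2 b.2 with h2 | h2
        · exact Or.inl ⟨h1.le, h2⟩
        · exact Or.inr ⟨h1.ge, h2⟩
      · right
        refine ⟨h1.le, ?_⟩
        by_contra h2
        push_neg at h2
        exact cpl_chain _ _ (hu0 z.1) (hv0 z.2) hb' ha' h1 h2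
    have hSne : S.Nonempty := by
      rw [← Finset.card_pos]
      omega
    have hcc' := chain_card S hSne hchain
    -- bound first projection
    have hb1 : (S.image Prod.fst).card ≤ m + 1 := by
      have hmap : ∀ i ∈ S.image Prod.fst,
          (if h : i < p then eA ⟨i, h⟩ else ∅) ∈ 𝒜.filter (fun A => z.1 ∈ A) := by
        intro i hi
        obtain ⟨ij, hij, rfl⟩ := Finset.mem_image.1 hi
        have hijS := Finset.mem_filter.1 hij
        have hip : ij.1 < p := by
          have := (Finset.mem_product.1 hijS.1).1
          simpa using this
        have hpos := (cpl_supp _ _ _ _ hijS.2).1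
        rw [dif_pos hip]
        exact Finset.mem_filter.2 ⟨heAmem _, husupp z.1 ij.1 hip hpos⟩
      have hinj : Set.InjOn (fun i => if h : i < p then eA ⟨i, h⟩ else ∅)
          (S.image Prod.fst) := by
        intro i hi i' hi' hii
        obtain ⟨ij, hij, rfl⟩ := Finset.mem_image.1 hi
        obtain ⟨ij', hij', rfl⟩ := Finset.mem_image.1 hi'
        have hip : ij.1 < p := by
          have := (Finset.mem_product.1 (Finset.mem_filter.1 hij).1).1
          simpa using this
        have hip' : ij'.1 < p := by
          have := (Finset.mem_product.1 (Finset.mem_filter.1 hij').1).1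
          simpa using this
        simp only [dif_pos hip, dif_pos hip'] at hii
        have := heAinj hii
        exact congrArg Fin.val this
      have := Finset.card_le_card_of_injOn _ hmap hinj
      calc (S.image Prod.fst).card ≤ (𝒜.filter (fun A => z.1 ∈ A)).card := this
        _ ≤ m + 1 := point_order hAord z.1
    have hb2 : (S.image Prod.snd).card ≤ n + 1 := by
      have hmap : ∀ j ∈ S.image Prod.snd,
          (if h : j < q then eB ⟨j, h⟩ else ∅) ∈ ℬ.filter (fun B => z.2 ∈ B) := by
        intro j hj
        obtain ⟨ij, hij, rfl⟩ := Finset.mem_image.1 hj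
        have hijS := Finset.mem_filter.1 hij
        have hjq : ij.2 < q := by
          have := (Finset.mem_product.1 hijS.1).2
          simpa using this
        have hpos := (cpl_supp _ _ _ _ hijS.2).2
        rw [dif_pos hjq]
        exact Finset.mem_filter.2 ⟨heBmem _, hvsupp z.2 ij.2 hjq hpos⟩
      have hinj : Set.InjOn (fun j => if h : j < q then eB ⟨j, h⟩ else ∅)
          (S.image Prod.snd) := by
        intro j hj j' hj' hjj
        obtain ⟨ij, hij, rfl⟩ := Finset.mem_image.1 hj
        obtain ⟨ij', hij', rfl⟩ := Finset.mem_image.1 hj'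
        have hjq : ij.2 < q := by
          have := (Finset.mem_product.1 (Finset.mem_filter.1 hij).1).2
          simpa using this
        have hjq' : ij'.2 < q := by
          have := (Finset.mem_product.1 (Finset.mem_filter.1 hij').1).2
          simpa using this
        simp only [dif_pos hjq, dif_pos hjq'] at hjj
        have := heBinj hjj
        exact congrArg Fin.val this
      have := Finset.card_le_card_of_injOn _ hmap hinj
      calc (S.image Prod.snd).card ≤ (ℬ.filter (fun B => z.2 ∈ B)).card := this
        _ ≤ n + 1 := point_order hBord z.2
    omega


end HemAux

/-- Hemmingsen's logarithmic inequality: for compact Hausdorff spaces,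
`dim (X₁ × X₂) ≤ dim X₁ + dim X₂`. -/
theorem covDim_prod_le (X₁ : Type u) (X₂ : Type v) [TopologicalSpace X₁]
    [TopologicalSpace X₂] [CompactSpace X₁] [CompactSpace X₂] [T2Space X₁] [T2Space X₂] :
    covDim (X₁ × X₂) ≤ covDim X₁ + covDim X₂ := by
  by_cases h1 : {k : ℕ | CovDimLE X₁ k}.Nonempty
  · by_cases h2 : {k : ℕ | CovDimLE X₂ k}.Nonempty
    · set m := sInf {k : ℕ | CovDimLE X₁ k} with hmdef
      set n := sInf {k : ℕ | CovDimLE X₂ k} with hndef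
      have hm : CovDimLE X₁ m := Nat.sInf_mem h1
      have hn : CovDimLE X₂ n := Nat.sInf_mem h2
      have hm' : (m : ℕ∞) ≤ covDim X₁ := by
        apply le_sInf
        rintro a ⟨k, hk, rfl⟩
        exact_mod_cast Nat.sInf_le hk
      have hn' : (n : ℕ∞) ≤ covDim X₂ := by
        apply le_sInf
        rintro a ⟨k, hk, rfl⟩
        exact_mod_cast Nat.sInf_le hk
      have key : CovDimLE (X₁ × X₂) (m + n) := HemAux.covDimLE_prod hm hn
      have h3 : covDim (X₁ × X₂) ≤ ((m + n : ℕ) : ℕ∞) :=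
        sInf_le ⟨m + n, key, rfl⟩
      calc covDim (X₁ × X₂) ≤ ((m + n : ℕ) : ℕ∞) := h3
        _ = (m : ℕ∞) + (n : ℕ∞) := by push_cast; rfl
        _ ≤ covDim X₁ + covDim X₂ := add_le_add hm' hn'
    · have h : covDim X₂ = ⊤ := by
        unfold covDim
        rw [Set.not_nonempty_iff_eq_empty.1 h2]
        simp
      rw [h, add_top]
      exact le_top
  · have h : covDim X₁ = ⊤ := by
      unfold covDim
      rw [Set.not_nonempty_iff_eq_empty.1 h1]
      simp
    rw [h, top_add]
    exact le_top
end

section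
/- Let M₁ and M₂ be countably compact normal manifolds (first countable, Tychonoff). Then dim(M₁ × M₂) ≤ dim M₁ + dim M₂. -/
open Set Topology

universe u v w

/-- `M` is an `n`-manifold: every point has an open neighborhood homeomorphic to `ℝⁿ`. -/
def IsTopManifold (M : Type*) [TopologicalSpace M] (n : ℕ) : Prop :=
  ∀ x : M, ∃ U : Set M, IsOpen U ∧ x ∈ U ∧ Nonempty (↥U ≃ₜ EuclideanSpace ℝ (Fin n))

/-!
Countably compact manifolds are first countable, hence sequentially compact, and the inequality
holds for all sequentially compact spaces by the classical argument for compacta. Sequential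
compactness supplies the two uniformity facts it needs: a positive continuous function is bounded
below by a positive constant, and for continuous `f` on `X × Y` the slices `f (·, y)` form a totally
bounded family for uniform convergence. Hence a finite cozero cover of `X × Y` is refined by a grid
of rectangles `{α a > 0} ×ˢ {β b > 0}` where every `x` has some `α a x ≥ δ` and every `y` some
`β b y ≥ δ`.

Let `K = a + b + 1`. Cutting a refinement of order `≤ a + 1` of the cover of `X` by the cells of the
`α`s between the levels `0` and `δ` at `K` distinct levels gives Ostrand's `K` families of
pairwise disjoint cozero sets, each point lying in members of at least `K - a` of them; a set of
such a family meeting `{α a ≥ δ}` lies in `{α a > 0}`. Doing the same on `Y`, every point of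
`X × Y` is served by a common index `j`, so the products of the `j`-th families that fit in a grid
rectangle form `K` disjoint families covering `X × Y`, and their union has order at most `K`.
-/

open Filter Function Uniformity
open scoped Finset

variable {X Y : Type*} [TopologicalSpace X] [TopologicalSpace Y]

namespace FunctionallyOpen

theorem setOf_pos (h : C(X, ℝ)) : FunctionallyOpen {x | 0 < h x} :=
  ⟨h ⊔ 0, by ext x; simp⟩

theorem setOf_lt (f : C(X, ℝ)) (c : ℝ) : FunctionallyOpen {x | f x < c} := by
  simpa [sub_pos] using setOf_pos (ContinuousMap.const X c - f)

theorem setOf_gt (f : C(X, ℝ)) (c : ℝ) : FunctionallyOpen {x | c < f x} := by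
  simpa [sub_pos] using setOf_pos (f - ContinuousMap.const X c)

theorem exists_nonneg {U : Set X} (hU : FunctionallyOpen U) :
    ∃ h : C(X, ℝ), (∀ x, 0 ≤ h x) ∧ U = {x | 0 < h x} := by
  obtain ⟨φ, rfl⟩ := hU
  exact ⟨φ * φ, fun x => mul_self_nonneg (φ x), by ext x; simp⟩

theorem iInter {ι : Type*} [Fintype ι] {U : ι → Set X} (hU : ∀ i, FunctionallyOpen (U i)) :
    FunctionallyOpen (⋂ i, U i) := by
  choose φ hφ using hU
  exact ⟨∏ i, φ i, by ext x; simp [hφ, Finset.prod_ne_zero_iff]⟩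

theorem prod {U : Set X} {V : Set Y} (hU : FunctionallyOpen U) (hV : FunctionallyOpen V) :
    FunctionallyOpen (U ×ˢ V) := by
  obtain ⟨φ, rfl⟩ := hU
  obtain ⟨ψ, rfl⟩ := hV
  exact ⟨φ.comp .fst * ψ.comp .snd, by ext; simp⟩

end FunctionallyOpen

theorem CountablyCompact.countablyCompactSpace (h : CountablyCompact X) :
    CountablyCompactSpace X :=
  ⟨isCountablyCompact_iff_countable_open_cover.2 fun U hU hcov =>
    (h U hU (univ_subset_iff.1 hcov)).imp fun _ ht => ht.ge⟩

theorem IsTopManifold.firstCountableTopology {n : ℕ} (h : IsTopManifold X n) :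
    FirstCountableTopology X where
  nhds_generated_countable x := by
    obtain ⟨U, hU, hxU, ⟨e⟩⟩ := h x
    have := e.isEmbedding.firstCountableTopology
    rw [← hU.isOpenEmbedding_subtypeVal.map_nhds_eq ⟨x, hxU⟩]
    infer_instance

instance Prod.seqCompactSpace [SeqCompactSpace X] [SeqCompactSpace Y] :
    SeqCompactSpace (X × Y) where
  isSeqCompact_univ u _ := by
    obtain ⟨x, φ, hφ, hx⟩ := SeqCompactSpace.tendsto_subseq fun n => (u n).1
    obtain ⟨y, ψ, hψ, hy⟩ := SeqCompactSpace.tendsto_subseq fun n => (u (φ n)).2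
    exact ⟨(x, y), mem_univ _, φ ∘ ψ, hφ.comp hψ,
      (hx.comp hψ.tendsto_atTop).prodMk_nhds hy⟩

theorem exists_pos_forall_le_of_forall_pos [SeqCompactSpace X] (g : C(X, ℝ)) (hg : ∀ x, 0 < g x) :
    ∃ δ, 0 < δ ∧ ∀ x, δ ≤ g x := by
  rcases isEmpty_or_nonempty X with hX | hX
  · exact ⟨1, one_pos, isEmptyElim⟩
  obtain ⟨_, ⟨x₀, rfl⟩, hmin⟩ :=
    (IsSeqCompact.range g.continuous.seqContinuous).isCompact.exists_isLeast (range_nonempty g)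
  exact ⟨g x₀, hg x₀, fun x => hmin ⟨x, rfl⟩⟩

theorem exists_finset_forall_mem_entourage [SeqCompactSpace X] {E : Type*} [UniformSpace E]
    {g : X → E} (hg : SeqContinuous g) {d : SetRel E E} (hd : d ∈ 𝓤 E) :
    ∃ A : Finset X, ∀ x, ∃ a ∈ A, (g x, g a) ∈ d := by
  obtain ⟨A, -, hAf, hA⟩ := exists_subset_image_finite_and.1 <|
    totallyBounded_iff_subset.1 (isSeqCompact_univ.image hg).totallyBounded d hd
  refine ⟨hAf.toFinset, fun x => ?_⟩
  obtain ⟨_, ⟨a, ha, rfl⟩, hxa⟩ := mem_iUnion₂.1 (hA (mem_image_of_mem g (mem_univ x)))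
  exact ⟨a, hAf.mem_toFinset.2 ha, hxa⟩

theorem seqContinuous_uniformFun_slice [SeqCompactSpace X] {E : Type*} [PseudoMetricSpace E]
    (f : C(X × Y, E)) : SeqContinuous fun y => UniformFun.ofFun fun x => f (x, y) := by
  intro yn y hy
  rw [UniformFun.tendsto_iff_tendstoUniformly, Metric.tendstoUniformly_iff]
  intro ε hε
  by_contra h
  obtain ⟨φ, hφ, hφε⟩ := extraction_of_frequently_atTop (not_eventually.1 h)
  simp only [Function.comp_apply, UniformFun.toFun_ofFun, not_forall, not_lt] at hφε
  choose xn hxn using hφε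
  obtain ⟨x, ψ, hψ, hx⟩ := SeqCompactSpace.tendsto_subseq xn
  have hlim : Tendsto (fun n => dist (f (xn (ψ n), y)) (f (xn (ψ n), yn (φ (ψ n)))))
      atTop (𝓝 (dist (f (x, y)) (f (x, y)))) :=
    ((f.continuous.tendsto _).comp (hx.prodMk_nhds tendsto_const_nhds)).dist
      ((f.continuous.tendsto _).comp
        (hx.prodMk_nhds (hy.comp (hφ.comp hψ).tendsto_atTop)))
  rw [dist_self] at hlim
  exact hε.not_ge (ge_of_tendsto hlim (Eventually.of_forall fun n => hxn _))

theorem exists_finset_forall_dist_slice_lt [SeqCompactSpace X] [SeqCompactSpace Y]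
    {E : Type*} [PseudoMetricSpace E] (f : C(X × Y, E)) {ε : ℝ} (hε : 0 < ε) :
    ∃ B : Finset Y, ∀ y, ∃ b ∈ B, ∀ x, dist (f (x, y)) (f (x, b)) < ε :=
  exists_finset_forall_mem_entourage (seqContinuous_uniformFun_slice f)
    (UniformFun.hasBasis_uniformity X E |>.mem_of_mem (Metric.dist_mem_uniformity (α := E) hε))

theorem dist_le_of_forall_dist_slice_lt {α β E : Type*} [PseudoMetricSpace E] (f : α × β → E)
    {B : Finset β} {ε : ℝ} (hB : ∀ y, ∃ b ∈ B, ∀ x, dist (f (x, y)) (f (x, b)) < ε)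
    (x x' : α) (y : β) :
    dist (f (x, y)) (f (x', y)) ≤
      ε + dist (fun b : B => f (x, b)) (fun b : B => f (x', b)) + ε := by
  obtain ⟨b, hb, hyb⟩ := hB y
  calc dist (f (x, y)) (f (x', y))
      ≤ dist (f (x, y)) (f (x, b)) + dist (f (x, b)) (f (x', b)) + dist (f (x', b)) (f (x', y)) :=
        dist_triangle4 _ _ _ _
    _ ≤ ε + dist (fun b : B => f (x, b)) (fun b : B => f (x', b)) + ε := by
        gcongr
        · exact (hyb x).le
        · exact dist_le_pi_dist (fun b : B => f (x, b)) (fun b : B => f (x', b)) ⟨b, hb⟩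
        · rw [dist_comm]; exact (hyb x').le

theorem dist_le_of_forall_dist_slices_lt {α β E : Type*} [PseudoMetricSpace E] (f : α × β → E)
    {A : Finset α} {B : Finset β} {ε : ℝ} (hA : ∀ x, ∃ a ∈ A, ∀ y, dist (f (x, y)) (f (a, y)) < ε)
    (hB : ∀ y, ∃ b ∈ B, ∀ x, dist (f (x, y)) (f (x, b)) < ε) (x x' : α) (y y' : β) :
    dist (f (x, y)) (f (x', y')) ≤ dist (fun b : B => f (x, b)) (fun b : B => f (x', b)) +
      dist (fun a : A => f (a, y)) (fun a : A => f (a, y')) + 4 * ε := by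
  have h₁ := dist_le_of_forall_dist_slice_lt f hB x x' y
  have h₂ := dist_le_of_forall_dist_slice_lt (fun p => f p.swap) hA y y' x'
  have h₃ := dist_triangle (f (x, y)) (f (x', y)) (f (x', y'))
  dsimp only [Prod.swap_prod_mk] at h₂
  linarith

theorem exists_cozero_functions_uniformly_large [SeqCompactSpace X] {𝒰 : Finset (Set X)}
    (h𝒰 : ∀ U ∈ 𝒰, FunctionallyOpen U) (hcov : ⋃₀ (𝒰 : Set (Set X)) = univ) :
    ∃ (ω : 𝒰 → C(X, ℝ)) (Δ : ℝ), 0 < Δ ∧ (∀ U : 𝒰, (U : Set X) = {x | 0 < ω U x}) ∧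
      ∀ x, ∃ U : 𝒰, Δ ≤ ω U x := by
  choose ω hω0 hω using fun U : 𝒰 => (h𝒰 U U.2).exists_nonneg
  have hsum : ∀ x, 0 < (∑ U, ω U) x := fun x => by
    obtain ⟨U, hU, hxU⟩ := hcov.ge (mem_univ x)
    rw [ContinuousMap.sum_apply]
    exact Finset.sum_pos' (fun U _ => hω0 U x)
      ⟨⟨U, hU⟩, Finset.mem_univ _, (hω ⟨U, hU⟩).subset hxU⟩
  obtain ⟨δ, hδ, hδle⟩ := exists_pos_forall_le_of_forall_pos _ hsum
  -- if every `ω U x` were below `δ / (#𝒰 + 1)`, their sum would be below `δ`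
  refine ⟨ω, δ / (Fintype.card 𝒰 + 1), by positivity, hω, fun x => ?_⟩
  have hlt : ∑ _U : 𝒰, δ / (Fintype.card 𝒰 + 1) < ∑ U, ω U x := by
    calc ∑ _U : 𝒰, δ / (Fintype.card 𝒰 + 1) = Fintype.card 𝒰 * δ / (Fintype.card 𝒰 + 1) := by
          simp [mul_div_assoc]
      _ < δ := by rw [div_lt_iff₀ (by positivity)]; nlinarith
      _ ≤ ∑ U, ω U x := by simpa using hδle x
  obtain ⟨U, -, hU⟩ := Finset.exists_lt_of_sum_lt hlt
  exact ⟨U, hU.le⟩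

theorem exists_grid_refinement [SeqCompactSpace X] [SeqCompactSpace Y]
    {𝒢 : Finset (Set (X × Y))} (h𝒢 : ∀ G ∈ 𝒢, FunctionallyOpen G)
    (hcov : ⋃₀ (𝒢 : Set (Set (X × Y))) = univ) :
    ∃ (A : Finset X) (B : Finset Y) (α : X → C(X, ℝ)) (β : Y → C(Y, ℝ)) (δ : ℝ), 0 < δ ∧
      (∀ x, ∃ a ∈ A, δ ≤ α a x) ∧ (∀ y, ∃ b ∈ B, δ ≤ β b y) ∧
      ∀ a b, ∃ G ∈ 𝒢, {x | 0 < α a x} ×ˢ {y | 0 < β b y} ⊆ G := by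
  obtain ⟨γ, Δ, hΔ, hγ, hγΔ⟩ := exists_cozero_functions_uniformly_large h𝒢 hcov
  -- on each grid rectangle `f` will move by less than `6 * η < Δ`
  set η := Δ / 8 with hη
  have hη0 : 0 < η := by positivity
  set f : C(X × Y, 𝒢 → ℝ) := ContinuousMap.pi γ
  obtain ⟨B₀, hB₀⟩ := exists_finset_forall_dist_slice_lt f hη0
  obtain ⟨A₀, hA₀⟩ := exists_finset_forall_dist_slice_lt (f.comp .prodSwap) hη0
  -- `u x` and `v y` record `f` along finitely many slices that approximate all the others
  set u : X → (B₀ → 𝒢 → ℝ) := fun x b => f (x, b)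
  set v : Y → (A₀ → 𝒢 → ℝ) := fun y a => f (a, y)
  obtain ⟨A, hA⟩ := exists_finset_forall_mem_entourage (by fun_prop : Continuous u).seqContinuous
    (Metric.dist_mem_uniformity (half_pos hη0))
  obtain ⟨B, hB⟩ := exists_finset_forall_mem_entourage (by fun_prop : Continuous v).seqContinuous
    (Metric.dist_mem_uniformity (half_pos hη0))
  refine ⟨A, B, fun a => ⟨fun x => max 0 (η - dist (u x) (u a)), by fun_prop⟩,
    fun b => ⟨fun y => max 0 (η - dist (v y) (v b)), by fun_prop⟩, η / 2, half_pos hη0,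
    fun x => ?_, fun y => ?_, fun a b => ?_⟩
  · obtain ⟨a, ha, hxa⟩ := hA x
    exact ⟨a, ha, le_max_of_le_right (by linarith [show dist (u x) (u a) < η / 2 from hxa])⟩
  · obtain ⟨b, hb, hyb⟩ := hB y
    exact ⟨b, hb, le_max_of_le_right (by linarith [show dist (v y) (v b) < η / 2 from hyb])⟩
  obtain ⟨G, hG⟩ := hγΔ (a, b)
  refine ⟨G, G.2, ?_⟩
  rintro ⟨x, y⟩ ⟨hx, hy⟩
  simp only [mem_ofPred_eq, ContinuousMap.coe_mk, lt_max_iff, lt_self_iff_false, false_or,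
    sub_pos] at hx hy
  have hγG : dist (γ G (x, y)) (γ G (a, b)) < 6 * η :=
    (dist_le_pi_dist (f (x, y)) (f (a, b)) G).trans_lt <| by
      linarith [dist_le_of_forall_dist_slices_lt f hA₀ hB₀ x a y b]
  rw [hγ G]
  show 0 < γ G (x, y)
  linarith [(abs_lt.1 (Real.dist_eq _ _ ▸ hγG)).1]

section ThresholdCell

variable {ι : Type*} (f : ι → C(X, ℝ)) (a b : ℝ)

def thresholdCell (σ : Finset ι) : Set X :=
  {x | ∀ i, (i ∈ σ → a < f i x) ∧ (i ∉ σ → f i x < b)}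

theorem functionallyOpen_thresholdCell [Fintype ι] (σ : Finset ι) :
    FunctionallyOpen (thresholdCell f a b σ) := by
  classical
  have : thresholdCell f a b σ = ⋂ i, if i ∈ σ then {x | a < f i x} else {x | f i x < b} := by
    ext x
    simp only [thresholdCell, mem_iInter]
    refine forall_congr' fun i => ?_
    split_ifs with hi <;> simp [hi]
  rw [this]
  refine FunctionallyOpen.iInter fun i => ?_
  split_ifs
  exacts [.setOf_gt (f i) a, .setOf_lt (f i) b]

theorem mem_thresholdCell_filter [Fintype ι] {x : X} (h : ∀ i, b ≤ f i x → a < f i x) :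
    x ∈ thresholdCell f a b {i | b ≤ f i x} := fun i =>
  ⟨fun hi => h i (Finset.mem_filter.1 hi).2,
    fun hi => not_le.1 fun h => hi (Finset.mem_filter.2 ⟨Finset.mem_univ i, h⟩)⟩

theorem eq_filter_of_mem_thresholdCell [Fintype ι] {θ : ℝ} {σ : Finset ι} {x : X}
    (hx : x ∈ thresholdCell f θ θ σ) : σ = ({i | θ < f i x} : Finset ι) := by
  ext i
  simp only [Finset.mem_filter, Finset.mem_univ, true_and]
  exact ⟨(hx i).1, fun h => by_contra fun hi => h.not_gt ((hx i).2 hi)⟩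

theorem pairwise_disjoint_thresholdCell [Fintype ι] (θ : ℝ) :
    Pairwise (Disjoint on (thresholdCell f θ θ)) := fun _ _ hne =>
  disjoint_left.2 fun _ hσ hτ =>
    hne ((eq_filter_of_mem_thresholdCell f hσ).trans (eq_filter_of_mem_thresholdCell f hτ).symm)

variable {f a b}

theorem subset_setOf_lt_of_subset_thresholdCell {σ : Finset ι} {V : Set X}
    (hV : V ⊆ thresholdCell f a b σ) {x : X} (hx : x ∈ V) {i : ι} (hi : b ≤ f i x) :
    V ⊆ {y | a < f i y} := by
  have hiσ : i ∈ σ := by_contra fun h => hi.not_gt ((hV hx i).2 h)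
  exact fun y hy => (hV hy i).1 hiσ

end ThresholdCell

theorem le_card_filter_forall_ne {ι : Type*} [Fintype ι] {v : ι → ℝ} {K a : ℕ} {θ : Fin K → ℝ}
    {Δ : ℝ} (hθ : Injective θ) (hθΔ : ∀ j, θ j ∈ Ioo 0 Δ) {i₀ : ι} (hi₀ : Δ ≤ v i₀)
    (hpos : #{i | 0 < v i} ≤ a + 1) : K - a ≤ #{j | ∀ i, v i ≠ θ j} := by
  classical
  rcases Nat.eq_zero_or_pos K with rfl | hK
  · simp
  set P : Finset ι := {i | 0 < v i}
  have hi₀P : i₀ ∈ P := Finset.mem_filter.2 ⟨Finset.mem_univ _, (hθΔ ⟨0, hK⟩).1.trans <|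
    (hθΔ ⟨0, hK⟩).2.trans_le hi₀⟩
  -- a level `θ j` hit by some `v i` is hit by some `i ∈ P` other than `i₀`
  have hbad : #{j | ¬ ∀ i, v i ≠ θ j} ≤ #((P.erase i₀).image v) := by
    refine Finset.card_le_card_of_injOn θ (fun j hj => ?_) hθ.injOn
    obtain ⟨i, hi⟩ := not_forall_not.1 (Finset.mem_filter.1 hj).2
    refine Finset.mem_image.2 ⟨i, Finset.mem_erase.2 ⟨?_, ?_⟩, hi⟩
    · rintro rfl
      exact (hθΔ j).2.not_ge (hi ▸ hi₀)
    · exact Finset.mem_filter.2 ⟨Finset.mem_univ _, hi ▸ (hθΔ j).1⟩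
  have := Finset.card_image_le (s := P.erase i₀) (f := v)
  have := Finset.card_erase_of_mem hi₀P
  have := Finset.card_filter_add_card_filter_not (s := Finset.univ)
    (fun j : Fin K => ∀ i, v i ≠ θ j)
  simp only [Finset.card_univ, Fintype.card_fin] at this
  omega

open Classical in
theorem card_filter_mem_le_of_sInter_eq_empty {α : Type*} {𝒱 : Finset (Set α)} {n : ℕ}
    (h : ∀ 𝒲 ⊆ 𝒱, n < #𝒲 → ⋂₀ (𝒲 : Set (Set α)) = ∅) (x : α) :
    #{V : 𝒱 | x ∈ (V : Set α)} ≤ n := by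
  by_contra! hlt
  set 𝒲 := ({V : 𝒱 | x ∈ (V : Set α)} : Finset 𝒱).map (Embedding.subtype _)
  have hx : x ∈ ⋂₀ (𝒲 : Set (Set α)) := mem_sInter.2 fun W hW => by
    obtain ⟨V, hV, rfl⟩ := Finset.mem_map.1 (Finset.mem_coe.1 hW)
    exact (Finset.mem_filter.1 hV).2
  refine (h 𝒲 (fun V hV => ?_) (by rwa [Finset.card_map])).subset hx
  obtain ⟨V, -, rfl⟩ := Finset.mem_map.1 hV
  exact V.2

/-- With `P V` saying that `V` refines a given cover, these are the families of Ostrand's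
characterization of `dim ≤ K - m`. -/
def HasOstrandFamilies (P : Set X → Prop) (K m : ℕ) : Prop :=
  ∃ D : Fin K → Finset (Set X), (∀ j, ∀ V ∈ D j, FunctionallyOpen V ∧ P V) ∧
    (∀ j, (D j : Set (Set X)).PairwiseDisjoint id) ∧
    ∀ x, ∃ J : Finset (Fin K), m ≤ #J ∧ ∀ j ∈ J, x ∈ ⋃₀ (D j : Set (Set X))

theorem HasOstrandFamilies.mono {P Q : Set X → Prop} {K m : ℕ} (h : HasOstrandFamilies P K m)
    (hPQ : ∀ V, P V → Q V) : HasOstrandFamilies Q K m :=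
  let ⟨D, hD, hdisj, hmult⟩ := h
  ⟨D, fun j V hV => (hD j V hV).imp_right (hPQ V), hdisj, hmult⟩

theorem CovDimLE.hasOstrandFamilies [SeqCompactSpace X] {a : ℕ} (ha : CovDimLE X a)
    {𝒰 : Finset (Set X)} (h𝒰 : ∀ U ∈ 𝒰, FunctionallyOpen U)
    (hcov : ⋃₀ (𝒰 : Set (Set X)) = univ) (K : ℕ) :
    HasOstrandFamilies (fun V => ∃ U ∈ 𝒰, V ⊆ U) K (K - a) := by
  classical
  obtain ⟨𝒱, h𝒱, h𝒱cov, h𝒱ref, h𝒱ord⟩ := ha 𝒰 h𝒰 hcov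
  obtain ⟨ω, Δ, hΔ, hω, hωΔ⟩ := exists_cozero_functions_uniformly_large h𝒱 h𝒱cov
  set θ : Fin K → ℝ := fun j => Δ * (j + 1) / (K + 1)
  have hθ : ∀ j, θ j ∈ Ioo 0 Δ := fun j => by
    refine ⟨by positivity, (div_lt_iff₀ (by positivity)).2 ?_⟩
    gcongr
    exact_mod_cast j.2
  have hθinj : Injective θ := fun j j' h => by
    rw [div_left_inj' (by positivity), mul_right_inj' hΔ.ne', add_left_inj] at h
    exact Fin.ext (by exact_mod_cast h)
  -- `x` lies in a cell at level `θ j` unless `θ j` is one of the values `ω W x`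
  refine ⟨fun j => ({T | T.Nonempty} : Finset (Finset 𝒱)).image (thresholdCell ω (θ j) (θ j)),
    fun j V hV => ?_, fun j => ?_, fun x => ?_⟩
  · obtain ⟨T, hT, rfl⟩ := Finset.mem_image.1 hV
    obtain ⟨W, hW⟩ := (Finset.mem_filter.1 hT).2
    obtain ⟨U, hU, hWU⟩ := h𝒱ref W W.2
    refine ⟨functionallyOpen_thresholdCell _ _ _ T, U, hU, fun y hy => hWU ?_⟩
    rw [hω W]
    exact (hθ j).1.trans ((hy W).1 hW)
  · intro V hV V' hV' hne
    obtain ⟨T, -, rfl⟩ := Finset.mem_image.1 hV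
    obtain ⟨T', -, rfl⟩ := Finset.mem_image.1 hV'
    exact pairwise_disjoint_thresholdCell ω (θ j) fun h => hne (congrArg _ h)
  obtain ⟨W₀, hW₀⟩ := hωΔ x
  refine ⟨({j | ∀ W, ω W x ≠ θ j} : Finset (Fin K)), le_card_filter_forall_ne hθinj hθ hW₀ ?_,
    fun j hj => ?_⟩
  · convert card_filter_mem_le_of_sInter_eq_empty h𝒱ord x using 3 with W
    rw [hω W]
    rfl
  refine ⟨_, Finset.mem_image_of_mem _ (Finset.mem_filter.2 ⟨Finset.mem_univ _,
    ⟨W₀, Finset.mem_filter.2 ⟨Finset.mem_univ _, (hθ j).2.le.trans hW₀⟩⟩⟩),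
    mem_thresholdCell_filter ω _ _ fun W hW => hW.lt_of_ne ((Finset.mem_filter.1 hj).2 W).symm⟩

theorem CovDimLE.hasOstrandFamilies_stable [SeqCompactSpace X] {a : ℕ} (ha : CovDimLE X a)
    {ι : Type*} [Fintype ι] (α : ι → C(X, ℝ)) {δ : ℝ} (hδ : 0 < δ) (K : ℕ) :
    HasOstrandFamilies (fun V => ∀ x ∈ V, ∀ i, δ ≤ α i x → V ⊆ {y | 0 < α i y}) K (K - a) := by
  classical
  refine (ha.hasOstrandFamilies (𝒰 := Finset.univ.image (thresholdCell α 0 δ)) ?_ ?_ K).mono ?_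
  · simp only [Finset.mem_image]
    rintro _ ⟨σ, -, rfl⟩
    exact functionallyOpen_thresholdCell α 0 δ σ
  · exact eq_univ_of_forall fun x => ⟨_, Finset.mem_image_of_mem _ (Finset.mem_univ _),
      mem_thresholdCell_filter α 0 δ fun i hi => hδ.trans_le hi⟩
  · rintro V ⟨_, hU, hVU⟩ x hx i hi
    obtain ⟨σ, -, rfl⟩ := Finset.mem_image.1 hU
    exact subset_setOf_lt_of_subset_thresholdCell hVU hx hi

theorem sInter_eq_empty_of_subset_biUnion {α : Type*} {K : ℕ} {P : Fin K → Finset (Set α)}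
    (hP : ∀ j, (P j : Set (Set α)).PairwiseDisjoint id) {𝒲 : Finset (Set α)}
    (h𝒲 : 𝒲 ⊆ Finset.univ.biUnion P) (hcard : K < #𝒲) : ⋂₀ (𝒲 : Set (Set α)) = ∅ := by
  by_contra! ⟨x, hx⟩
  choose c hc using fun W : 𝒲 => Finset.mem_biUnion.1 (h𝒲 W.2)
  obtain ⟨W, W', hne, hWW'⟩ := Fintype.exists_ne_map_eq_of_card_lt c (by simpa using hcard)
  refine Set.disjoint_left.1 (hP (c W) (hc W).2 (hWW' ▸ (hc W').2) (Subtype.coe_ne_coe.2 hne))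
    (hx W W.2) (hx W' W'.2)

theorem pairwiseDisjoint_image_prod {α β : Type*} {𝒱 : Finset (Set α)} {𝒲 : Finset (Set β)}
    (h𝒱 : (𝒱 : Set (Set α)).PairwiseDisjoint id) (h𝒲 : (𝒲 : Set (Set β)).PairwiseDisjoint id)
    {s : Finset (Set α × Set β)} (hs : s ⊆ 𝒱 ×ˢ 𝒲) :
    ((s.image fun VW => VW.1 ×ˢ VW.2 : Finset (Set (α × β))) : Set (Set (α × β))).PairwiseDisjoint
      id := by
  intro _ h₁ _ h₂ hne
  obtain ⟨⟨V, W⟩, hVW, rfl⟩ := Finset.mem_image.1 h₁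
  obtain ⟨⟨V', W'⟩, hVW', rfl⟩ := Finset.mem_image.1 h₂
  obtain ⟨hV, hW⟩ := Finset.mem_product.1 (hs hVW)
  obtain ⟨hV', hW'⟩ := Finset.mem_product.1 (hs hVW')
  rw [Function.onFun, id, id, Set.disjoint_prod]
  by_cases hVV' : V = V'
  · subst hVV'
    exact .inr (h𝒲 hW hW' fun h => hne (h ▸ rfl))
  · exact .inl (h𝒱 hV hV' hVV')

theorem HasOstrandFamilies.exists_refinement {𝒰 : Finset (Set X)} {n : ℕ}
    (h : HasOstrandFamilies (fun V => ∃ U ∈ 𝒰, V ⊆ U) (n + 1) 1) :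
    ∃ 𝒱 : Finset (Set X), (∀ V ∈ 𝒱, FunctionallyOpen V) ∧ ⋃₀ (𝒱 : Set (Set X)) = univ ∧
      (∀ V ∈ 𝒱, ∃ U ∈ 𝒰, V ⊆ U) ∧
      ∀ 𝒲 : Finset (Set X), 𝒲 ⊆ 𝒱 → n + 1 < #𝒲 → ⋂₀ (𝒲 : Set (Set X)) = ∅ := by
  obtain ⟨D, hD, hdisj, hmult⟩ := h
  refine ⟨Finset.univ.biUnion D, fun V hV => ?_, eq_univ_of_forall fun x => ?_, fun V hV => ?_,
    fun 𝒲 h𝒲 hcard => sInter_eq_empty_of_subset_biUnion hdisj h𝒲 hcard⟩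
  · obtain ⟨j, -, hj⟩ := Finset.mem_biUnion.1 hV
    exact (hD j V hj).1
  · obtain ⟨J, hJ, hxJ⟩ := hmult x
    obtain ⟨j, hj⟩ := Finset.card_pos.1 hJ
    obtain ⟨V, hV, hxV⟩ := hxJ j hj
    exact ⟨V, Finset.mem_biUnion.2 ⟨j, Finset.mem_univ _, hV⟩, hxV⟩
  · obtain ⟨j, -, hj⟩ := Finset.mem_biUnion.1 hV
    exact (hD j V hj).2

theorem CovDimLE.prod [SeqCompactSpace X] [SeqCompactSpace Y] {a b : ℕ} (ha : CovDimLE X a)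
    (hb : CovDimLE Y b) : CovDimLE (X × Y) (a + b) := by
  classical
  intro 𝒢 h𝒢 hcov
  obtain ⟨A, B, α, β, δ, hδ, hαδ, hβδ, hrect⟩ := exists_grid_refinement h𝒢 hcov
  obtain ⟨DX, hDX, hDXdisj, hDXmult⟩ :=
    ha.hasOstrandFamilies_stable (fun i : A => α i) hδ (a + b + 1)
  obtain ⟨DY, hDY, hDYdisj, hDYmult⟩ :=
    hb.hasOstrandFamilies_stable (fun i : B => β i) hδ (a + b + 1)
  set fits : Set X × Set Y → Prop := fun VW =>
    ∃ a' b', VW.1 ⊆ {x | 0 < α a' x} ∧ VW.2 ⊆ {y | 0 < β b' y}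
  refine HasOstrandFamilies.exists_refinement
    ⟨fun j => ((DX j ×ˢ DY j).filter fits).image fun VW => VW.1 ×ˢ VW.2, fun j R hR => ?_,
      fun j => pairwiseDisjoint_image_prod (hDXdisj j) (hDYdisj j) (Finset.filter_subset _ _),
      fun ⟨x, y⟩ => ?_⟩
  · obtain ⟨⟨V, W⟩, hVW, rfl⟩ := Finset.mem_image.1 hR
    obtain ⟨hVW, a', b', hVa', hWb'⟩ := Finset.mem_filter.1 hVW
    obtain ⟨hV, hW⟩ := Finset.mem_product.1 hVW
    obtain ⟨G, hG, hGsub⟩ := hrect a' b'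
    exact ⟨(hDX j V hV).1.prod (hDY j W hW).1, G, hG, (Set.prod_mono hVa' hWb').trans hGsub⟩
  -- `a + 1` indices serve `y` and `b + 1` serve `x`, among `a + b + 1`
  obtain ⟨JX, hJX, hxJ⟩ := hDXmult x
  obtain ⟨JY, hJY, hyJ⟩ := hDYmult y
  obtain ⟨j, hj⟩ := Finset.inter_nonempty_of_card_lt_card_add_card (Finset.subset_univ JX)
    (Finset.subset_univ JY) (by simp only [Finset.card_univ, Fintype.card_fin]; omega)
  obtain ⟨V, hV, hxV⟩ := hxJ j (Finset.mem_inter.1 hj).1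
  obtain ⟨W, hW, hyW⟩ := hyJ j (Finset.mem_inter.1 hj).2
  obtain ⟨a', ha', hxa'⟩ := hαδ x
  obtain ⟨b', hb', hyb'⟩ := hβδ y
  have hfits : fits (V, W) :=
    ⟨a', b', (hDX j V hV).2 x hxV ⟨a', ha'⟩ hxa', (hDY j W hW).2 y hyW ⟨b', hb'⟩ hyb'⟩
  refine ⟨{j}, by simp, fun j' hj' => ?_⟩
  rw [Finset.mem_singleton.1 hj']
  exact ⟨V ×ˢ W, Finset.mem_image.2 ⟨(V, W), Finset.mem_filter.2
    ⟨Finset.mem_product.2 ⟨hV, hW⟩, hfits⟩, rfl⟩, hxV, hyW⟩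

theorem CovDimLE.covDim_le {n : ℕ} (h : CovDimLE X n) : covDim X ≤ n :=
  sInf_le ⟨n, h, rfl⟩

theorem exists_covDimLE_eq_of_covDim_ne_top (h : covDim X ≠ ⊤) :
    ∃ n, CovDimLE X n ∧ covDim X = n := by
  have hne : {n | CovDimLE X n}.Nonempty := by
    by_contra! hempty
    exact h (by simp [covDim, hempty])
  refine ⟨sInf {n | CovDimLE X n}, Nat.sInf_mem hne, ?_⟩
  rw [covDim, ENat.natCast_sInf hne, sInf_image]

theorem covDim_prod_le_s11 [SeqCompactSpace X] [SeqCompactSpace Y] :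
    covDim (X × Y) ≤ covDim X + covDim Y := by
  rcases eq_or_ne (covDim X) ⊤ with hX | hX
  · simp [hX]
  rcases eq_or_ne (covDim Y) ⊤ with hY | hY
  · simp [hY]
  obtain ⟨a, ha, hXa⟩ := exists_covDimLE_eq_of_covDim_ne_top hX
  obtain ⟨b, hb, hYb⟩ := exists_covDimLE_eq_of_covDim_ne_top hY
  rw [hXa, hYb]
  exact_mod_cast (ha.prod hb).covDim_le

theorem covDim_prod_manifolds_le_general (M₁ : Type u) (M₂ : Type u)
    [TopologicalSpace M₁] [TopologicalSpace M₂]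
    (hM₁ : ∃ n, IsTopManifold M₁ n) (hM₂ : ∃ n, IsTopManifold M₂ n)
    (h₁ : CountablyCompact M₁) (h₂ : CountablyCompact M₂) :
    covDim (M₁ × M₂) ≤ covDim M₁ + covDim M₂ := by
  obtain ⟨n₁, hn₁⟩ := hM₁
  obtain ⟨n₂, hn₂⟩ := hM₂
  have := hn₁.firstCountableTopology
  have := hn₂.firstCountableTopology
  have := h₁.countablyCompactSpace
  have := h₂.countablyCompactSpace
  exact covDim_prod_le_s11

/-- For countably compact normal manifolds, `dim (M₁ × M₂) ≤ dim M₁ + dim M₂`. -/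
theorem covDim_prod_manifolds_le (M₁ : Type u) (M₂ : Type u)
    [TopologicalSpace M₁] [TopologicalSpace M₂] [NormalSpace M₁] [NormalSpace M₂]
    [T35Space M₁] [T35Space M₂]
    (hM₁ : ∃ n, IsTopManifold M₁ n) (hM₂ : ∃ n, IsTopManifold M₂ n)
    (h₁ : CountablyCompact M₁) (h₂ : CountablyCompact M₂) :
    covDim (M₁ × M₂) ≤ covDim M₁ + covDim M₂ :=
  covDim_prod_manifolds_le_general M₁ M₂ hM₁ hM₂ h₁ h₂
end
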